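/- Under Assumption 1, for every μ ∈ Δ(Ω) and every n ∈ ℕ there exists an optimal n-step sequential persuasion starting from μ, i.e., an n-step sequential persuasion S^{(n)} starting from μ with 𝒱(S^{(n)}) = v_n(μ). -/

import Mathlib

open Filter Topology
open scoped Classical

noncomputable section

/-- Δ(Ω): beliefs, i.e. probability distributions on the finite state space Ω,
as a subspace of Ω → ℝ (its topology agrees with the total-variation one). -/
abbrev Belief (Ω : Type*) [Fintype Ω] :=
  {p : Ω → ℝ // (∀ ω, 0 ≤ p ω) ∧ ∑ ω, p ω = 1}

variable {Ω : Type*} [Fintype Ω]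

/-- An element of F₀: a finite-support experiment, i.e. a finitely supported probability
distribution over beliefs (keys are the distinct posteriors p_j, values the positive
weights λ_j). -/
structure SPExp (Ω : Type*) [Fintype Ω] where
  w : Belief Ω →₀ ℝ
  nonneg : ∀ p, 0 ≤ w p
  sum_one : ∑ p ∈ w.support, w p = 1

namespace SPExp

/-- τ(e): the support of an experiment. -/
def tau (e : SPExp Ω) : Finset (Belief Ω) := e.w.support

/-- Expectation of a real-valued function under an experiment. -/
def expect (e : SPExp Ω) (f : Belief Ω → ℝ) : ℝ := ∑ p ∈ e.w.support, e.w p * f p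

/-- σ(e): the barycenter (expectation) of an experiment. -/
def sigma (e : SPExp Ω) : Belief Ω :=
  ⟨fun ω => ∑ p ∈ e.w.support, e.w p * p.val ω,
   fun ω => Finset.sum_nonneg fun p _ => mul_nonneg (e.nonneg p) (p.2.1 ω),
   by
     calc ∑ ω, ∑ p ∈ e.w.support, e.w p * p.val ω
         = ∑ p ∈ e.w.support, ∑ ω, e.w p * p.val ω := Finset.sum_comm
       _ = ∑ p ∈ e.w.support, e.w p * ∑ ω, p.val ω := by
           refine Finset.sum_congr rfl fun p _ => ?_
           rw [Finset.mul_sum]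
       _ = ∑ p ∈ e.w.support, e.w p := by
           refine Finset.sum_congr rfl fun p _ => ?_
           rw [p.2.2, mul_one]
       _ = 1 := e.sum_one⟩

/-- The trivial experiment (1, p). -/
def triv (p : Belief Ω) : SPExp Ω where
  w := Finsupp.single p 1
  nonneg := fun q => by
    rw [Finsupp.single_apply]
    split <;> norm_num
  sum_one := by
    rw [Finsupp.support_single_ne_zero _ one_ne_zero]
    simp

end SPExp

/-- T: the set of trivial experiments. -/
def Trivials (Ω : Type*) [Fintype Ω] : Set (SPExp Ω) := Set.range SPExp.triv

/-- Weak convergence of experiments, viewed as Borel probability measures on Δ(Ω). -/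
def WeakTendsto (es : ℕ → SPExp Ω) (e : SPExp Ω) : Prop :=
  ∀ f : Belief Ω → ℝ, Continuous f →
    Tendsto (fun i => (es i).expect f) atTop (𝓝 (e.expect f))

/-- Convergence of beliefs in total variation. -/
def TVTendsto (ps : ℕ → Belief Ω) (p : Belief Ω) : Prop :=
  Tendsto (fun i => ∑ ω, |(ps i).val ω - p.val ω|) atTop (𝓝 0)

/-- Histories, most recent step first: entries are (experiment taken, realized posterior);
the starting belief is kept separately. -/
abbrev Hist (Ω : Type*) [Fintype Ω] := List (SPExp Ω × Belief Ω)

/-- last(ξ): the current belief after history ξ started at μ. -/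
def lastBelief (μ : Belief Ω) : Hist Ω → Belief Ω
  | [] => μ
  | (_, p) :: _ => p

/-- Pr[ξ]: the probability of a history. -/
def histProb : Hist Ω → ℝ
  | [] => 1
  | (e, p) :: ξ => e.w p * histProb ξ

/-- A sequential persuasion starting from μ with feasible experiments F, given by its
history-dependent choice of the next (feasible, Bayes-plausible) experiment.  An n-step
sequential persuasion is such a strategy used for n steps; an infinite sequential
persuasion is the strategy itself. -/
structure SeqP {Ω : Type*} [Fintype Ω] (F : Set (SPExp Ω)) (μ : Belief Ω) where
  next : Hist Ω → SPExp Ω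
  feasible : ∀ ξ, next ξ ∈ F
  bayes : ∀ ξ, (next ξ).sigma = lastBelief μ ξ

variable {F : Set (SPExp Ω)} {μ : Belief Ω}

/-- Expectation of g over the n-step histories of S extending ξ. -/
def histExp (S : SeqP F μ) (g : Hist Ω → ℝ) : ℕ → Hist Ω → ℝ
  | 0, ξ => g ξ
  | n + 1, ξ => (S.next ξ).expect fun p => histExp S g n ((S.next ξ, p) :: ξ)

/-- Ξ_n: the set of n-step histories of S. -/
def Hists (S : SeqP F μ) : ℕ → Set (Hist Ω)
  | 0 => {[]}
  | n + 1 => {ξ' | ∃ ξ ∈ Hists S n, ∃ p ∈ (S.next ξ).tau, ξ' = (S.next ξ, p) :: ξ}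

/-- ξ padded by l trivial steps. -/
def padHist (μ : Belief Ω) (ξ : Hist Ω) (l : ℕ) : Hist Ω :=
  List.replicate l (SPExp.triv (lastBelief μ ξ), lastBelief μ ξ) ++ ξ

/-- S terminates after ξ: all subsequent choices (along trivial continuations of ξ)
are the trivial experiment. -/
def TerminatesAfter (S : SeqP F μ) (ξ : Hist Ω) : Prop :=
  ∀ l : ℕ, S.next (padHist μ ξ l) = SPExp.triv (lastBelief μ ξ)

/-- 𝒱(S⁽ⁿ⁾) = E[v(b_n)], the expected utility of the n-step persuasion given by the
first n steps of S. -/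
def stepUtility (v : Belief Ω → ℝ) (S : SeqP F μ) (n : ℕ) : ℝ :=
  histExp S (fun ξ => v (lastBelief μ ξ)) n []

/-- Pr[S terminates after n steps]. -/
def termProb (S : SeqP F μ) (n : ℕ) : ℝ :=
  histExp S (fun ξ => if TerminatesAfter S ξ then 1 else 0) n []

/-- 𝒱(S) for an infinite sequential persuasion S. -/
def infUtility (v : Belief Ω → ℝ) (S : SeqP F μ) : ℝ :=
  ⨆ n : ℕ, histExp S (fun ξ => if TerminatesAfter S ξ then v (lastBelief μ ξ) else 0) n []

/-- Pr[b_n ∈ O] for the belief b_n induced by S after n steps. -/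
def massIn (S : SeqP F μ) (O : Set (Belief Ω)) (n : ℕ) : ℝ :=
  histExp S (fun ξ => if lastBelief μ ξ ∈ O then 1 else 0) n []

/-- v_n(p): the optimal value over n-step sequential persuasions starting from p. -/
def vN (F : Set (SPExp Ω)) (v : Belief Ω → ℝ) (n : ℕ) (p : Belief Ω) : ℝ :=
  ⨆ S : SeqP F p, stepUtility v S n

/-- v_∞(p): the optimal value over infinite sequential persuasions starting from p. -/
def vInf (F : Set (SPExp Ω)) (v : Belief Ω → ℝ) (p : Belief Ω) : ℝ :=
  ⨆ S : SeqP F p, infUtility v S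

/-- Assumption 1: a uniform support bound h, and weak closedness of F. -/
def Assumption1 (F : Set (SPExp Ω)) (h : ℕ) : Prop :=
  (∀ e ∈ F, e.tau.card ≤ h) ∧
  ∀ es : ℕ → SPExp Ω, (∀ i, es i ∈ F) → ∀ e : SPExp Ω, WeakTendsto es e → e ∈ F

/-- Shannon entropy of a belief. -/
def entropy (p : Belief Ω) : ℝ := -∑ ω, p.val ω * Real.log (p.val ω)

/-- Assumption 2: every nontrivial feasible experiment lowers expected entropy by δ. -/
def Assumption2 (F : Set (SPExp Ω)) (δ : ℝ) : Prop :=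
  ∀ e ∈ F \ Trivials Ω, e.expect entropy ≤ entropy e.sigma - δ

/-- S is (effectively) an n-step sequential persuasion: after n steps it only takes
trivial experiments. -/
def IsNStep (S : SeqP F μ) (n : ℕ) : Prop :=
  ∀ ξ : Hist Ω, n ≤ ξ.length → S.next ξ = SPExp.triv (lastBelief μ ξ)

/-- Assumption 3 at prior μ: a sequence of finite-step sequential persuasions whose
values tend to v_∞(μ) and which terminate at a uniform rate. -/
def Assumption3 (F : Set (SPExp Ω)) (v : Belief Ω → ℝ) (μ : Belief Ω) : Prop :=
  ∃ (nk : ℕ → ℕ) (Sk : ℕ → SeqP F μ),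
    (∀ k, IsNStep (Sk k) (nk k)) ∧
    Tendsto (fun k => stepUtility v (Sk k) (nk k)) atTop (𝓝 (vInf F v μ)) ∧
    ∀ ε : ℝ, 0 < ε → ∃ N : ℕ, ∀ k, N ≤ nk k → 1 - ε ≤ termProb (Sk k) N

/-- v̂: the concave closure of v (the value of unconstrained Bayesian persuasion). -/
def concaveClosure (v : Belief Ω → ℝ) (p : Belief Ω) : ℝ :=
  sSup {x : ℝ | ∃ e : SPExp Ω, e.sigma = p ∧ x = e.expect v}

/-- O is implementable for (μ, F). -/
def Implementable (F : Set (SPExp Ω)) (μ : Belief Ω) (O : Set (Belief Ω)) : Prop :=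
  ∀ ε : ℝ, 0 < ε → ∃ (n : ℕ) (S : SeqP F μ), 1 - ε < massIn S O n

/-- S is a Markov sequential persuasion compatible with (μ, D, Z, ρ). -/
def MarkovCompatible (S : SeqP F μ) (D Z : Set (Belief Ω)) (ρ : Belief Ω → SPExp Ω) : Prop :=
  ∀ ξ : Hist Ω,
    (lastBelief μ ξ ∈ D → S.next ξ = ρ (lastBelief μ ξ)) ∧
    (lastBelief μ ξ ∈ Z → S.next ξ = SPExp.triv (lastBelief μ ξ))

/-- The j-th child of vertex m at depth n of the infinite h-ary tree. -/
def treeChild {h n : ℕ} (m : Fin (h ^ n)) (j : Fin h) : Fin (h ^ (n + 1)) :=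
  ⟨m.val * h + j.val, by
    have h1 : m.val + 1 ≤ h ^ n := m.isLt
    have h2 : j.val < h := j.isLt
    calc m.val * h + j.val < m.val * h + h := by omega
      _ = (m.val + 1) * h := by ring
      _ ≤ h ^ n * h := Nat.mul_le_mul h1 le_rfl
      _ = h ^ (n + 1) := (pow_succ h n).symm⟩

/-- An h-branching sequential persuasion starting from μ. -/
structure HBranch (Ω : Type*) [Fintype Ω] (F : Set (SPExp Ω)) (h : ℕ) (μ : Belief Ω) where
  π : ∀ n : ℕ, Fin (h ^ n) → ℝ
  β : ∀ n : ℕ, Fin (h ^ n) → Belief Ω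
  η : ∀ n : ℕ, Fin (h ^ n) → SPExp Ω
  π_nonneg : ∀ n m, 0 ≤ π n m
  π_sum : ∀ n : ℕ, ∑ m, π n m = 1
  η_mem : ∀ n m, η n m ∈ F
  β_root : ∀ m, β 0 m = μ
  compat_sigma : ∀ n m, (η n m).sigma = β n m
  compat_tau : ∀ (n : ℕ) (m : Fin (h ^ n)), ∀ p ∈ (η n m).tau,
    ∃ j : Fin h, β (n + 1) (treeChild m j) = p
  consistent : ∀ (n : ℕ) (m : Fin (h ^ n)) (p : Belief Ω),
    (∑ j : Fin h, if β (n + 1) (treeChild m j) = p then π (n + 1) (treeChild m j) else 0)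
      = π n m * (η n m).w p

/-- c' (at depth n + l) is a descendant of c (at depth n) in the h-ary tree. -/
def Descendant {h : ℕ} : {n : ℕ} → (l : ℕ) → Fin (h ^ n) → Fin (h ^ (n + l)) → Prop
  | _, 0, c, c' => c = c'
  | _, l + 1, c, c' => ∃ c'' j, Descendant l c c'' ∧ c' = treeChild c'' j

namespace HBranch

variable {h : ℕ}

/-- B terminates after vertex m at depth n. -/
def TermAfter (B : HBranch Ω F h μ) (n : ℕ) (m : Fin (h ^ n)) : Prop :=
  B.η n m ∈ Trivials Ω ∧
  ∀ (l : ℕ) (c' : Fin (h ^ (n + l))), Descendant l m c' → 0 < B.π (n + l) c' →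
    B.η (n + l) c' ∈ Trivials Ω

/-- Pr[B terminates after n steps]. -/
def termProb (B : HBranch Ω F h μ) (n : ℕ) : ℝ :=
  ∑ m : Fin (h ^ n), if B.TermAfter n m then B.π n m else 0

end HBranch

/-- B represents the infinite sequential persuasion S (via maps r_n : C_n → Ξ_n). -/
def Represents (S : SeqP F μ) {h : ℕ} (B : HBranch Ω F h μ) : Prop :=
  ∃ r : ∀ n : ℕ, Fin (h ^ n) → Hist Ω,
    ∀ n : ℕ,
      (∀ c, r n c ∈ Hists S n) ∧
      (∀ ξ ∈ Hists S n, histProb ξ = ∑ c, if r n c = ξ then B.π n c else 0) ∧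
      (∀ c, lastBelief μ (r n c) = B.β n c ∧ S.next (r n c) = B.η n c) ∧
      (∀ l : ℕ, ∀ ξ ∈ Hists S n, ∀ ξ' ∈ Hists S (n + l),
        (ξ <:+ ξ' ↔
          ∀ c' : Fin (h ^ (n + l)), r (n + l) c' = ξ' →
            ∃ c : Fin (h ^ n), r n c = ξ ∧ Descendant l c c'))

/-- The number of nontrivial experiments taken along a history. -/
def nontrivCount (ξ : Hist Ω) : ℕ :=
  ξ.countP fun s => decide (s.1 ∉ Trivials Ω)

end

/-!
Backward induction. Put `V₀ = v` and `V_{k+1}(p) = sup {E_e[V_k] | e ∈ 𝓕(p)}`. Experiments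
with at most `h` posteriors are the continuous images of the compact parameter space
`stdSimplex ℝ (Fin h) × (Fin h → Δ(Ω))`, and by Assumption 1 the feasible parameters form a
closed set. Hence, when `V_k` is upper semicontinuous, the supremum defining `V_{k+1}(p)` is
attained, and `V_{k+1}` is again upper semicontinuous because its superlevel sets are
continuous images of compact sets. Playing, at step `i`, an experiment attaining `V_{n-i}`
achieves `V_n(μ)`, and no sequential persuasion does better.
-/

theorem Finsupp.sum_sum_single_index {ι α M N : Type*} [AddCommMonoid M]
    [AddCommMonoid N] (s : Finset ι) (q : ι → α) (c : ι → M) {g : α → M → N}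
    (h_zero : ∀ a, g a 0 = 0) (h_add : ∀ a m₁ m₂, g a (m₁ + m₂) = g a m₁ + g a m₂) :
    (∑ j ∈ s, Finsupp.single (q j) (c j)).sum g = ∑ j ∈ s, g (q j) (c j) := by
  rw [← Finsupp.sum_finsetSum_index h_zero h_add]
  exact Finset.sum_congr rfl fun j _ => Finsupp.sum_single_index (h_zero _)

theorem UpperSemicontinuous.mul_left_of_nonneg {X : Type*} [TopologicalSpace X] {a g : X → ℝ}
    (hg : UpperSemicontinuous g) (ha : Continuous a) (ha0 : ∀ x, 0 ≤ a x) :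
    UpperSemicontinuous fun x => a x * g x := by
  intro x y hy
  obtain ⟨c, hgc, hc⟩ : ∃ c, g x < c ∧ a x * c < y := by
    have hnear : ∀ᶠ t in 𝓝 (g x), a x * t < y :=
      ((continuous_const_mul (a x)).tendsto (g x)).eventually (gt_mem_nhds hy)
    exact (eventually_mem_nhdsWithin.and (hnear.filter_mono nhdsWithin_le_nhds) :
      ∀ᶠ t in 𝓝[>] (g x), _).exists
  filter_upwards [hg x c hgc, ((ha.mul continuous_const).tendsto x).eventually (gt_mem_nhds hc)]
    with x' hgx' hax'
  exact (mul_le_mul_of_nonneg_left hgx'.le (ha0 x')).trans_lt hax'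

instance {Ω : Type*} [Fintype Ω] : CompactSpace (Belief Ω) :=
  isCompact_iff_compactSpace.mp (isCompact_stdSimplex ℝ Ω)

namespace SPExp

variable {Ω : Type*} [Fintype Ω]

theorem ext {e e' : SPExp Ω} (h : e.w = e'.w) : e = e' := by
  cases e; cases e'; congr

theorem expect_mono (e : SPExp Ω) {f g : Belief Ω → ℝ} (h : ∀ p, f p ≤ g p) :
    e.expect f ≤ e.expect g :=
  Finset.sum_le_sum fun p _ => mul_le_mul_of_nonneg_left (h p) (e.nonneg p)

theorem triv_sigma (p : Belief Ω) : (triv p).sigma = p := by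
  ext ω
  simp [sigma, triv]

variable {h : ℕ}

/-- Weights and posteriors of an experiment with at most `h` posteriors. -/
abbrev Param (Ω : Type*) [Fintype Ω] (h : ℕ) := stdSimplex ℝ (Fin h) × (Fin h → Belief Ω)

/-- Posteriors that occur repeatedly in `x.2` pool their weights. -/
noncomputable def ofParam (x : Param Ω h) : SPExp Ω where
  w := ∑ j, Finsupp.single (x.2 j) (x.1.1 j)
  nonneg p := by
    rw [Finsupp.finsetSum_apply]
    exact Finset.sum_nonneg fun j _ => by
      rw [Finsupp.single_apply]; split_ifs <;> simp [x.1.2.1 j]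
  sum_one := (Finsupp.sum_sum_single_index Finset.univ x.2 x.1.1 (g := fun _ m => m)
    (fun _ => rfl) fun _ _ _ => rfl).trans x.1.2.2

theorem expect_ofParam (x : Param Ω h) (f : Belief Ω → ℝ) :
    (ofParam x).expect f = ∑ j, x.1.1 j * f (x.2 j) :=
  Finsupp.sum_sum_single_index Finset.univ x.2 x.1.1 (g := fun p m => m * f p)
    (fun _ => zero_mul _) fun _ _ _ => add_mul _ _ _

theorem exists_ofParam_eq (e : SPExp Ω) (hcard : e.tau.card ≤ h) :
    ∃ x : Param Ω h, ofParam x = e := by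
  obtain ⟨ι⟩ : Nonempty (e.tau ↪ Fin h) :=
    Function.Embedding.nonempty_of_card_le (by simpa using hcard)
  set lam : Fin h → ℝ := Function.extend ι (fun p => e.w p) 0
  set q : Fin h → Belief Ω := Function.extend ι Subtype.val fun _ => e.sigma
  have lam_apply : ∀ p, lam (ι p) = e.w p := ι.injective.extend_apply _ _
  have q_apply : ∀ p, q (ι p) = p := ι.injective.extend_apply _ _
  have lam_out : ∀ j ∉ Set.range ι, lam j = 0 := fun j hj =>
    Function.extend_apply' _ _ _ hj
  have sum_lam : ∑ j, lam j = 1 := by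
    rw [← Fintype.sum_of_injective ι ι.injective (fun p => e.w p) lam lam_out
      fun p => (lam_apply p).symm, Finset.sum_coe_sort e.tau fun p => e.w p]
    exact e.sum_one
  have lam_nonneg : ∀ j, 0 ≤ lam j := by
    intro j
    by_cases hj : j ∈ Set.range ι
    · obtain ⟨p, rfl⟩ := hj
      rw [lam_apply]
      exact e.nonneg p
    · rw [lam_out j hj]
  refine ⟨(⟨lam, lam_nonneg, sum_lam⟩, q), ext ?_⟩
  calc ∑ j, Finsupp.single (q j) (lam j)
      = ∑ p : e.tau, Finsupp.single (p : Belief Ω) (e.w p) :=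
        (Fintype.sum_of_injective ι ι.injective _ _
          (fun j hj => by rw [lam_out j hj, Finsupp.single_zero])
          fun p => by rw [lam_apply, q_apply]).symm
    _ = e.w := (Finset.sum_coe_sort e.tau fun p => Finsupp.single p (e.w p)).trans
        (Finsupp.sum_single e.w)

theorem continuous_weight (j : Fin h) :
    Continuous fun x : Param Ω h => x.1.1 j :=
  (continuous_apply j).comp (continuous_subtype_val.comp continuous_fst)

theorem continuous_expect_ofParam {f : Belief Ω → ℝ} (hf : Continuous f) :
    Continuous fun x : Param Ω h => (ofParam x).expect f := by
  simp only [expect_ofParam]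
  exact continuous_finsetSum _ fun j _ =>
    (continuous_weight j).mul (hf.comp ((continuous_apply j).comp continuous_snd))

theorem continuous_sigma_ofParam :
    Continuous fun x : Param Ω h => (ofParam x).sigma :=
  Continuous.subtype_mk (continuous_pi fun ω =>
    continuous_expect_ofParam ((continuous_apply ω).comp continuous_subtype_val)) _

theorem upperSemicontinuous_expect_ofParam {f : Belief Ω → ℝ} (hf : UpperSemicontinuous f) :
    UpperSemicontinuous fun x : Param Ω h =>
      (ofParam x).expect f := by
  simp only [expect_ofParam]
  exact upperSemicontinuous_sum fun j _ =>
    (hf.comp ((continuous_apply j).comp continuous_snd)).mul_left_of_nonneg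
      (continuous_weight j) fun x => x.1.2.1 j

theorem isClosed_setOf_ofParam_mem {F : Set (SPExp Ω)}
    (hF : ∀ es : ℕ → SPExp Ω, (∀ i, es i ∈ F) → ∀ e, WeakTendsto es e → e ∈ F) :
    IsClosed {x : Param Ω h | ofParam x ∈ F} :=
  IsSeqClosed.isClosed fun _ _ hxF hx =>
    hF _ hxF _ fun _ hf => ((continuous_expect_ofParam hf).tendsto _).comp hx

end SPExp

section OneStep

variable {Ω : Type*} [Fintype Ω] {F : Set (SPExp Ω)} {h : ℕ} {f : Belief Ω → ℝ}

/-- The paper's `𝓕(p)`. -/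
def feasibleAt (F : Set (SPExp Ω)) (p : Belief Ω) : Set (SPExp Ω) :=
  {e | e ∈ F ∧ e.sigma = p}

noncomputable def bestValue (F : Set (SPExp Ω)) (f : Belief Ω → ℝ) (p : Belief Ω) : ℝ :=
  sSup ((fun e => e.expect f) '' feasibleAt F p)

/-- The feasible experiments at `p` are the images of a compact set of parameters, on which
the expected payoff is upper semicontinuous. -/
theorem exists_isMaxOn_expect (hA1 : Assumption1 F h) (hTF : Trivials Ω ⊆ F)
    (hf : UpperSemicontinuous f) (p : Belief Ω) :
    ∃ e ∈ feasibleAt F p, IsMaxOn (fun e => e.expect f) (feasibleAt F p) e := by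
  set K := {x : SPExp.Param Ω h | SPExp.ofParam x ∈ F} ∩
    (fun x => (SPExp.ofParam x).sigma) ⁻¹' {p}
  have hK : IsCompact K :=
    ((SPExp.isClosed_setOf_ofParam_mem hA1.2).inter
      (isClosed_singleton.preimage SPExp.continuous_sigma_ofParam)).isCompact
  have hTriv : SPExp.triv p ∈ F := hTF ⟨p, rfl⟩
  obtain ⟨x, hx⟩ := (SPExp.triv p).exists_ofParam_eq (hA1.1 _ hTriv)
  have hKne : K.Nonempty := ⟨x, by simpa [K, hx, SPExp.triv_sigma] using hTriv⟩
  obtain ⟨x₀, hx₀, hmax⟩ :=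
    ((SPExp.upperSemicontinuous_expect_ofParam hf).upperSemicontinuousOn K).exists_isMaxOn
      hKne hK
  refine ⟨SPExp.ofParam x₀, hx₀, fun e he => ?_⟩
  obtain ⟨x, rfl⟩ := e.exists_ofParam_eq (hA1.1 e he.1)
  exact hmax he

theorem isGreatest_bestValue (hA1 : Assumption1 F h) (hTF : Trivials Ω ⊆ F)
    (hf : UpperSemicontinuous f) (p : Belief Ω) :
    IsGreatest ((fun e => e.expect f) '' feasibleAt F p) (bestValue F f p) := by
  obtain ⟨e, he, hmax⟩ := exists_isMaxOn_expect hA1 hTF hf p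
  have hGreatest : IsGreatest ((fun e => e.expect f) '' feasibleAt F p) (e.expect f) :=
    ⟨Set.mem_image_of_mem _ he, Set.forall_mem_image.2 hmax⟩
  rwa [bestValue, hGreatest.csSup_eq]

/-- A superlevel set of `bestValue F f` is the image of a compact set of parameters under the
continuous barycenter map, hence closed. -/
theorem upperSemicontinuous_bestValue (hA1 : Assumption1 F h) (hTF : Trivials Ω ⊆ F)
    (hf : UpperSemicontinuous f) : UpperSemicontinuous (bestValue F f) := by
  rw [upperSemicontinuous_iff_isClosed_preimage]
  intro c
  have hlevel : bestValue F f ⁻¹' Set.Ici c = (fun x => (SPExp.ofParam x).sigma) ''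
      ({x : SPExp.Param Ω h | SPExp.ofParam x ∈ F} ∩
        {x | c ≤ (SPExp.ofParam x).expect f}) := by
    ext p
    constructor
    · intro hp
      obtain ⟨e, ⟨heF, rfl⟩, he⟩ := (isGreatest_bestValue hA1 hTF hf p).1
      obtain ⟨x, rfl⟩ := e.exists_ofParam_eq (hA1.1 _ heF)
      exact ⟨x, ⟨heF, hp.trans_eq he.symm⟩, rfl⟩
    · rintro ⟨x, ⟨hxF, hxc⟩, rfl⟩
      exact hxc.trans ((isGreatest_bestValue hA1 hTF hf _).2 ⟨_, ⟨hxF, rfl⟩, rfl⟩)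
  rw [hlevel]
  exact SPExp.continuous_sigma_ofParam.isClosedMap _
    ((SPExp.isClosed_setOf_ofParam_mem hA1.2).inter
      ((SPExp.upperSemicontinuous_expect_ofParam hf).isClosed_preimage c))

end OneStep

section DynamicProgramming

variable {Ω : Type*} [Fintype Ω] {F : Set (SPExp Ω)} {h : ℕ} {v : Belief Ω → ℝ}

noncomputable def valueIter (F : Set (SPExp Ω)) (v : Belief Ω → ℝ) : ℕ → Belief Ω → ℝ
  | 0 => v
  | n + 1 => bestValue F (valueIter F v n)

theorem upperSemicontinuous_valueIter (hA1 : Assumption1 F h) (hTF : Trivials Ω ⊆ F)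
    (hv : UpperSemicontinuous v) : ∀ n, UpperSemicontinuous (valueIter F v n)
  | 0 => hv
  | n + 1 => upperSemicontinuous_bestValue hA1 hTF (upperSemicontinuous_valueIter hA1 hTF hv n)

theorem isGreatest_valueIter_succ (hA1 : Assumption1 F h) (hTF : Trivials Ω ⊆ F)
    (hv : UpperSemicontinuous v) (n : ℕ) (p : Belief Ω) :
    IsGreatest ((fun e => e.expect (valueIter F v n)) '' feasibleAt F p)
      (valueIter F v (n + 1) p) :=
  isGreatest_bestValue hA1 hTF (upperSemicontinuous_valueIter hA1 hTF hv n) p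

theorem histExp_le_valueIter (hA1 : Assumption1 F h) (hTF : Trivials Ω ⊆ F)
    (hv : UpperSemicontinuous v) {μ : Belief Ω} (S : SeqP F μ) :
    ∀ k ξ, histExp S (fun ξ => v (lastBelief μ ξ)) k ξ ≤ valueIter F v k (lastBelief μ ξ)
  | 0, _ => le_rfl
  | k + 1, ξ => calc
      (S.next ξ).expect
          (fun p => histExp S (fun ξ => v (lastBelief μ ξ)) k ((S.next ξ, p) :: ξ))
        ≤ (S.next ξ).expect (valueIter F v k) :=
          SPExp.expect_mono _ fun _ => histExp_le_valueIter hA1 hTF hv S k _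
      _ ≤ valueIter F v (k + 1) (lastBelief μ ξ) :=
          (isGreatest_valueIter_succ hA1 hTF hv k _).2 ⟨_, ⟨S.feasible ξ, S.bayes ξ⟩, rfl⟩

/-- The optimal strategy plays, after a history of length `i`, an experiment attaining
`valueIter F v (n - i)` at the current belief. -/
theorem exists_stepUtility_eq_valueIter (hA1 : Assumption1 F h) (hTF : Trivials Ω ⊆ F)
    (hv : UpperSemicontinuous v) (μ : Belief Ω) (n : ℕ) :
    ∃ S : SeqP F μ, stepUtility v S n = valueIter F v n μ := by
  choose best hbest hbest_val using fun k p => (isGreatest_valueIter_succ hA1 hTF hv k p).1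
  let S : SeqP F μ :=
    { next := fun ξ => best (n - (ξ.length + 1)) (lastBelief μ ξ)
      feasible := fun ξ => (hbest _ _).1
      bayes := fun ξ => (hbest _ _).2 }
  have hS : ∀ k ξ, ξ.length + k = n →
      histExp S (fun ξ => v (lastBelief μ ξ)) k ξ = valueIter F v k (lastBelief μ ξ) := by
    intro k
    induction k with
    | zero => intro ξ _; rfl
    | succ k ih =>
      intro ξ hξ
      have hk : n - (ξ.length + 1) = k := by omega
      calc histExp S (fun ξ => v (lastBelief μ ξ)) (k + 1) ξ
          = (S.next ξ).expect (valueIter F v k) :=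
            congrArg _ (funext fun _ => ih _ (by simp only [List.length_cons]; omega))
        _ = valueIter F v (k + 1) (lastBelief μ ξ) := by
            simp only [S, hk]
            exact hbest_val k _
  exact ⟨S, hS n [] (zero_add n)⟩

theorem isGreatest_stepUtility (hA1 : Assumption1 F h) (hTF : Trivials Ω ⊆ F)
    (hv : UpperSemicontinuous v) (μ : Belief Ω) (n : ℕ) :
    IsGreatest (Set.range fun S : SeqP F μ => stepUtility v S n) (valueIter F v n μ) :=
  let ⟨S, hS⟩ := exists_stepUtility_eq_valueIter hA1 hTF hv μ n
  ⟨⟨S, hS⟩, Set.forall_mem_range.2 fun S => histExp_le_valueIter hA1 hTF hv S n []⟩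

end DynamicProgramming

theorem optimal_finite_exists_general {Ω : Type*} [Fintype Ω]
    (F : Set (SPExp Ω)) (hTF : Trivials Ω ⊆ F)
    (v : Belief Ω → ℝ)
    (husc : UpperSemicontinuous v)
    (h : ℕ) (hA1 : Assumption1 F h) :
    ∀ (μ : Belief Ω) (n : ℕ), ∃ S : SeqP F μ, stepUtility v S n = vN F v n μ := by
  intro μ n
  have hOpt := isGreatest_stepUtility hA1 hTF husc μ n
  obtain ⟨S, hS⟩ := hOpt.1
  exact ⟨S, hS.trans hOpt.csSup_eq.symm⟩

/-- Corollary: under Assumption 1, an optimal n-step sequential persuasion exists. -/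
theorem optimal_finite_exists {Ω : Type*} [Fintype Ω] [Nonempty Ω]
    (F : Set (SPExp Ω)) (hTF : Trivials Ω ⊆ F)
    (v : Belief Ω → ℝ) (Vlo Vhi : ℝ) (hVlo : 0 < Vlo) (hVV : Vlo ≤ Vhi)
    (hvlo : ∀ p, Vlo ≤ v p) (hvhi : ∀ p, v p ≤ Vhi)
    (husc : UpperSemicontinuous v)
    (h : ℕ) (hA1 : Assumption1 F h) :
    ∀ (μ : Belief Ω) (n : ℕ), ∃ S : SeqP F μ, stepUtility v S n = vN F v n μ :=
  optimal_finite_exists_general F hTF v husc h hA1
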